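/- For every integer n ≥ 3, d_3(n) < d_2(n); that is, the minimum defect attainable with exactly three pairwise non-congruent rectangles is strictly smaller than the minimum defect attainable with exactly two. -/

import Mathlib

/-- An axis-aligned rectangle with integer coordinates placed on the grid:
lower-left corner `(x, y)`, width `w`, and height `h`. -/
structure Rect where
  x : ℕ
  y : ℕ
  w : ℕ
  h : ℕ
deriving DecidableEq

/-- The area of a rectangle. -/
def Rect.area (r : Rect) : ℕ := r.w * r.h

/-- Two rectangles are congruent if they have the same dimensions,
possibly after a ninety-degree rotation. -/
def Rect.Congruent (r s : Rect) : Prop :=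
  (r.w = s.w ∧ r.h = s.h) ∨ (r.w = s.h ∧ r.h = s.w)

/-- The rectangle `r` covers the unit grid cell `[i, i+1) × [j, j+1)`. -/
def Rect.Covers (r : Rect) (i j : ℕ) : Prop :=
  r.x ≤ i ∧ i < r.x + r.w ∧ r.y ≤ j ∧ j < r.y + r.h

/-- A Mondrian partition of the `n × n` square: a finite collection of
pairwise non-congruent rectangles with positive integer side lengths that
tile the square (every cell of the square is covered by exactly one
rectangle, and rectangles lie inside the square). -/
structure Mondrian (n : ℕ) where
  rects : Finset Rect
  pos : ∀ r ∈ rects, 0 < r.w ∧ 0 < r.h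
  inside : ∀ r ∈ rects, r.x + r.w ≤ n ∧ r.y + r.h ≤ n
  cover : ∀ i j : ℕ, i < n → j < n → ∃! r : Rect, r ∈ rects ∧ r.Covers i j
  noncong : ∀ r ∈ rects, ∀ s ∈ rects, r ≠ s → ¬ r.Congruent s

/-- The defect of a Mondrian partition: the difference between the largest
and the smallest rectangle areas. -/
def Mondrian.defect {n : ℕ} (P : Mondrian n) : ℕ :=
  P.rects.sup fun r => P.rects.sup fun s => r.area - s.area

/-- A Mondrian partition is perfect if all its rectangles have the same area. -/
def Mondrian.IsPerfect {n : ℕ} (P : Mondrian n) : Prop :=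
  ∀ r ∈ P.rects, ∀ s ∈ P.rects, r.area = s.area

/-- `mondrianDk n k` is the minimum defect over all Mondrian partitions of the
`n × n` square using exactly `k` rectangles. -/
noncomputable def mondrianDk (n k : ℕ) : ℕ :=
  sInf {d | ∃ P : Mondrian n, P.rects.card = k ∧ P.defect = d}

/-- `mondrianD n` is the minimum defect over all Mondrian partitions of the
`n × n` square (into at least two rectangles). -/
noncomputable def mondrianD (n : ℕ) : ℕ :=
  sInf {d | ∃ P : Mondrian n, 2 ≤ P.rects.card ∧ P.defect = d}

/-!
In a partition into two rectangles, the rectangle at the corner `(0, 0)` must span a full side of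
the square, so the two rectangles are strips `n × a` and `n × b` with `a + b = n` and `a ≠ b`.
Their areas differ by `n * |a - b|`, and since `a - b ≡ n (mod 2)` this is at least `n`, and at
least `2 * n` when `n` is even. Three rectangles do better: a full-height strip of width about
`n / 3` beside a column cut into two almost equal pieces has defect `n - 1`, or `2 * n - 1` when
`n` is even.
-/

namespace Mondrian

variable {n : ℕ}

theorem area_sub_area_le_defect (P : Mondrian n) {r s : Rect} (hr : r ∈ P.rects)
    (hs : s ∈ P.rects) : r.area - s.area ≤ P.defect :=
  (Finset.le_sup (f := fun s => r.area - s.area) hs).trans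
    (Finset.le_sup (f := fun r => P.rects.sup fun s => r.area - s.area) hr)

theorem defect_le (P : Mondrian n) {B : ℕ}
    (h : ∀ r ∈ P.rects, ∀ s ∈ P.rects, r.area ≤ s.area + B) : P.defect ≤ B :=
  Finset.sup_le fun r hr => Finset.sup_le fun s hs => tsub_le_iff_left.2 (h r hr s hs)

theorem eq_of_covers (P : Mondrian n) {i j : ℕ} (hi : i < n) (hj : j < n) {r s : Rect}
    (hr : r ∈ P.rects) (hs : s ∈ P.rects) (hri : r.Covers i j) (hsi : s.Covers i j) : r = s :=
  (P.cover i j hi hj).unique ⟨hr, hri⟩ ⟨hs, hsi⟩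

theorem strips_of_rects_eq_pair (P : Mondrian n) {r s : Rect} (hrs : r ≠ s)
    (hP : P.rects = {r, s}) (hn : 0 < n) (h₀ : r.Covers 0 0) :
    (r.w = n ∧ s.w = n ∧ r.h + s.h = n) ∨ (r.h = n ∧ s.h = n ∧ r.w + s.w = n) := by
  have hr : r ∈ P.rects := by simp [hP]
  have hs : s ∈ P.rects := by simp [hP]
  have hcell : ∀ i j, i < n → j < n →
      (r.Covers i j ∨ s.Covers i j) ∧ ¬(r.Covers i j ∧ s.Covers i j) := by
    intro i j hi hj
    refine ⟨?_, fun h => hrs (P.eq_of_covers hi hj hr hs h.1 h.2)⟩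
    obtain ⟨t, ⟨ht, hti⟩, -⟩ := P.cover i j hi hj
    rw [hP, Finset.mem_insert, Finset.mem_singleton] at ht
    rcases ht with rfl | rfl
    exacts [Or.inl hti, Or.inr hti]
  -- these four cells already force the shape of `s`
  have := hcell s.x s.y
  have := hcell (n - 1) (n - 1)
  have := hcell r.w 0
  have := hcell 0 r.h
  have := P.pos r hr
  have := P.pos s hs
  have := P.inside r hr
  have := P.inside s hs
  simp only [Rect.Covers] at *
  omega

theorem le_defect_of_card_eq_two (P : Mondrian n) (hn : 0 < n) (hc : P.rects.card = 2) :
    (2 - n % 2) * n ≤ P.defect := by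
  obtain ⟨r, ⟨hr, h₀⟩, -⟩ := P.cover 0 0 hn hn
  obtain ⟨s, hs, hsr⟩ := Finset.exists_mem_ne (by omega : 1 < P.rects.card) r
  have hP : P.rects = {r, s} := by
    refine (Finset.eq_of_subset_of_card_le ?_ ?_).symm
    · simp [Finset.insert_subset_iff, hr, hs]
    · rw [hc, Finset.card_pair hsr.symm]
  have hnc := P.noncong r hr s hs hsr.symm
  obtain ⟨a, b, hab, hne, hra, hsb⟩ :
      ∃ a b, a + b = n ∧ a ≠ b ∧ r.area = a * n ∧ s.area = b * n := by
    rcases P.strips_of_rects_eq_pair hsr.symm hP hn h₀ with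
      ⟨hrw, hsw, hsum⟩ | ⟨hrh, hsh, hsum⟩
    · refine ⟨r.h, s.h, hsum, fun h => hnc (Or.inl ⟨hrw.trans hsw.symm, h⟩), ?_, ?_⟩ <;>
        simp only [Rect.area, hrw, hsw, mul_comm]
    · exact ⟨r.w, s.w, hsum, fun h => hnc (Or.inl ⟨h, hrh.trans hsh.symm⟩),
        by rw [Rect.area, hrh], by rw [Rect.area, hsh]⟩
  have hrs := P.area_sub_area_le_defect hr hs
  have hsr := P.area_sub_area_le_defect hs hr
  rw [hra, hsb, ← Nat.sub_mul] at hrs hsr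
  rcases (by omega : 2 - n % 2 ≤ a - b ∨ 2 - n % 2 ≤ b - a) with h | h
  · exact (Nat.mul_le_mul_right n h).trans hrs
  · exact (Nat.mul_le_mul_right n h).trans hsr

theorem exists_card_eq_two (hn : 3 ≤ n) : ∃ P : Mondrian n, P.rects.card = 2 := by
  refine ⟨⟨{⟨0, 0, n, 1⟩, ⟨0, 1, n, n - 1⟩}, ?_, ?_, ?_, ?_⟩, ?_⟩
  · simp only [Finset.mem_insert, Finset.mem_singleton, forall_eq_or_imp, forall_eq]
    omega
  · simp only [Finset.mem_insert, Finset.mem_singleton, forall_eq_or_imp, forall_eq]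
    omega
  · intro i j hi hj
    refine existsUnique_of_exists_of_unique ?_ ?_
    · simp only [Finset.mem_insert, Finset.mem_singleton, exists_eq_or_imp, exists_eq_left,
        Rect.Covers]
      omega
    · simp only [Finset.mem_insert, Finset.mem_singleton, Rect.Covers]
      rintro r s ⟨rfl | rfl, hr⟩ ⟨rfl | rfl, hs⟩ <;> dsimp only at hr hs <;>
        simp only [Rect.mk.injEq] <;> omega
  · simp only [Finset.mem_insert, Finset.mem_singleton, forall_eq_or_imp, forall_eq,
      Rect.Congruent, ne_eq, Rect.mk.injEq, true_and, and_true, not_true_eq_false, false_implies]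
    omega
  · rw [Finset.card_pair]
    simp only [ne_eq, Rect.mk.injEq]
    omega

theorem exists_card_eq_three_defect_le {w u a b B : ℕ} (hw : 0 < w) (hu : 0 < u) (ha : 0 < a)
    (hab : a < b) (hwu : w + u = n) (hn : a + b = n) (h₁ : w * n ≤ u * a + B)
    (h₂ : u * b ≤ w * n + B) (h₃ : u * b ≤ u * a + B) :
    ∃ P : Mondrian n, P.rects.card = 3 ∧ P.defect ≤ B := by
  let P : Mondrian n :=
    { rects := {⟨0, 0, w, n⟩, ⟨w, 0, u, a⟩, ⟨w, a, u, b⟩}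
      pos := by
        simp only [Finset.mem_insert, Finset.mem_singleton, forall_eq_or_imp, forall_eq]
        omega
      inside := by
        simp only [Finset.mem_insert, Finset.mem_singleton, forall_eq_or_imp, forall_eq]
        omega
      cover := by
        intro i j hi hj
        refine existsUnique_of_exists_of_unique ?_ ?_
        · simp only [Finset.mem_insert, Finset.mem_singleton, exists_eq_or_imp, exists_eq_left,
            Rect.Covers]
          omega
        · simp only [Finset.mem_insert, Finset.mem_singleton, Rect.Covers]
          rintro r s ⟨rfl | rfl | rfl, hr⟩ ⟨rfl | rfl | rfl, hs⟩ <;> dsimp only at hr hs <;>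
            simp only [Rect.mk.injEq] <;> omega
      noncong := by
        simp only [Finset.mem_insert, Finset.mem_singleton, forall_eq_or_imp, forall_eq,
          Rect.Congruent, ne_eq, Rect.mk.injEq, true_and, and_true, not_true_eq_false,
          false_implies]
        omega }
  have hua : u * a ≤ u * b := Nat.mul_le_mul_left u hab.le
  refine ⟨P, ?_, P.defect_le ?_⟩
  · rw [Finset.card_insert_of_notMem, Finset.card_pair]
    · simp only [ne_eq, Rect.mk.injEq]
      omega
    · simp only [Finset.mem_insert, Finset.mem_singleton, Rect.mk.injEq]
      omega
  · simp only [P, Finset.mem_insert, Finset.mem_singleton, forall_eq_or_imp, forall_eq,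
      Rect.area]
    omega

theorem exists_card_eq_three_defect_lt (hn : 3 ≤ n) :
    ∃ P : Mondrian n, P.rects.card = 3 ∧ P.defect < (2 - n % 2) * n := by
  suffices ∃ B, (n % 2 = 1 → B < n) ∧ B < 2 * n ∧
      ∃ P : Mondrian n, P.rects.card = 3 ∧ P.defect ≤ B by
    obtain ⟨B, hodd, heven, P, hc, hd⟩ := this
    refine ⟨P, hc, hd.trans_lt ?_⟩
    rcases Nat.mod_two_eq_zero_or_one n with h | h <;> simp only [h] <;> omega
  obtain ⟨k, r, hr₃, hr₉, rfl⟩ : ∃ k r, 3 ≤ r ∧ r < 9 ∧ n = 6 * k + r :=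
    ⟨(n - 3) / 6, (n - 3) % 6 + 3, by omega, by omega, by omega⟩
  -- a strip of width about `n / 3`, next to a column split as evenly as non-congruence allows
  interval_cases r
  · refine ⟨6 * k + 2, ?_, ?_, exists_card_eq_three_defect_le (w := 2 * k + 1) (u := 4 * k + 2)
      (a := 3 * k + 1) (b := 3 * k + 2) ?_ ?_ ?_ ?_ ?_ ?_ ?_ ?_ ?_⟩ <;> first | omega | nlinarith
  · refine ⟨12 * k + 7, ?_, ?_, exists_card_eq_three_defect_le (w := 2 * k + 1) (u := 4 * k + 3)
      (a := 3 * k + 1) (b := 3 * k + 3) ?_ ?_ ?_ ?_ ?_ ?_ ?_ ?_ ?_⟩ <;> first | omega | nlinarith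
  · refine ⟨6 * k + 4, ?_, ?_, exists_card_eq_three_defect_le (w := 2 * k + 2) (u := 4 * k + 3)
      (a := 3 * k + 2) (b := 3 * k + 3) ?_ ?_ ?_ ?_ ?_ ?_ ?_ ?_ ?_⟩ <;> first | omega | nlinarith
  · refine ⟨12 * k + 11, ?_, ?_, exists_card_eq_three_defect_le (w := 2 * k + 2) (u := 4 * k + 4)
      (a := 3 * k + 2) (b := 3 * k + 4) ?_ ?_ ?_ ?_ ?_ ?_ ?_ ?_ ?_⟩ <;> first | omega | nlinarith
  · refine ⟨6 * k + 6, ?_, ?_, exists_card_eq_three_defect_le (w := 2 * k + 2) (u := 4 * k + 5)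
      (a := 3 * k + 3) (b := 3 * k + 4) ?_ ?_ ?_ ?_ ?_ ?_ ?_ ?_ ?_⟩ <;> first | omega | nlinarith
  · refine ⟨12 * k + 15, ?_, ?_, exists_card_eq_three_defect_le (w := 2 * k + 3) (u := 4 * k + 5)
      (a := 3 * k + 3) (b := 3 * k + 5) ?_ ?_ ?_ ?_ ?_ ?_ ?_ ?_ ?_⟩ <;> first | omega | nlinarith

end Mondrian

/-- For every `n ≥ 3`, `d_3(n) < d_2(n)`. -/
theorem d3_lt_d2 (n : ℕ) (hn : 3 ≤ n) : mondrianDk n 3 < mondrianDk n 2 := by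
  obtain ⟨Q, hQ, hQd⟩ := Mondrian.exists_card_eq_three_defect_lt hn
  obtain ⟨P₀, hP₀⟩ := Mondrian.exists_card_eq_two hn
  obtain ⟨P, hP, hPd⟩ := Nat.sInf_mem (⟨P₀.defect, P₀, hP₀, rfl⟩ :
    {d | ∃ P : Mondrian n, P.rects.card = 2 ∧ P.defect = d}.Nonempty)
  calc mondrianDk n 3 ≤ Q.defect := Nat.sInf_le ⟨Q, hQ, rfl⟩
    _ < (2 - n % 2) * n := hQd
    _ ≤ P.defect := P.le_defect_of_card_eq_two (by omega) hP
    _ = mondrianDk n 2 := hPd
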